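/- Planar Bollobás–Riordan polynomial equals the Tutte polynomial. Let G = (H, σ, θ) be a combinatorial map encoding an orientable ribbon graph satisfying k(E) − bc(E) + n(E) = 0 (i.e., the surface G has genus zero). Then in any commutative ring, for all x, y, z: R_G(x−1, y−1, z) = Σ_{F ⊆ E} (x−1)^{r(G)−r(F)} (y−1)^{n(F)} = T_Γ(x, y); in particular R_G(x, y, z) contains no powers of z and is independent of z. -/
import Mathlib


open Finset
open scoped Classical

/-- The permutation `θ_F` acting as `θ` on the half-edges belonging to edges of the
spanning subgraph (encoded by the `θ`-invariant set `S` of half-edges) and as the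
identity elsewhere.  Defined whenever `S` is `θ`-invariant and `θ` is an involution
(and as the identity permutation otherwise). -/
noncomputable def restrictPerm {H : Type*} [DecidableEq H] (θ : Equiv.Perm H) (S : Finset H) :
    Equiv.Perm H :=
  if hcl : (∀ a ∈ S, θ a ∈ S) ∧ (∀ a, θ (θ a) = a) then
    { toFun := fun a => if a ∈ S then θ a else a
      invFun := fun a => if a ∈ S then θ a else a
      left_inv := fun a => by
        by_cases h : a ∈ S
        · simp [h, hcl.1 a h, hcl.2 a]
        · simp [h]
      right_inv := fun a => by
        by_cases h : a ∈ S
        · simp [h, hcl.1 a h, hcl.2 a]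
        · simp [h] }
  else 1

/-- The number of orbits of the cyclic group generated by a permutation. -/
noncomputable def permOrbits {H : Type*} [Fintype H] (π : Equiv.Perm H) : ℕ :=
  Nat.card (MulAction.orbitRel.Quotient (Subgroup.zpowers π) H)

/-- `v(G)`: the number of vertices, i.e. the number of orbits of `σ`. -/
noncomputable def vCount {H : Type*} [Fintype H] (σ : Equiv.Perm H) : ℕ := permOrbits σ

/-- `bc(F)`: the number of boundary components of the spanning subgraph, i.e. the
number of orbits of `σ ∘ θ_F`. -/
noncomputable def bcCount {H : Type*} [Fintype H] [DecidableEq H]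
    (σ θ : Equiv.Perm H) (S : Finset H) : ℕ :=
  permOrbits (σ * restrictPerm θ S)

/-- `k(F)`: the number of connected components of the spanning subgraph, i.e. the
number of orbits of the subgroup generated by `σ` and `θ_F`. -/
noncomputable def kCount {H : Type*} [Fintype H] [DecidableEq H]
    (σ θ : Equiv.Perm H) (S : Finset H) : ℕ :=
  Nat.card (MulAction.orbitRel.Quotient
    (Subgroup.closure {σ, restrictPerm θ S} : Subgroup (Equiv.Perm H)) H)

/-- `e(F)`: the number of edges of the spanning subgraph, i.e. half the number of
half-edges in `S` (as an integer, for use in exponents). -/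
def eCount {H : Type*} (S : Finset H) : ℤ := (S.card / 2 : ℕ)

/-- `r(F) = v(G) - k(F)`: the rank of the spanning subgraph. -/
noncomputable def rCount {H : Type*} [Fintype H] [DecidableEq H]
    (σ θ : Equiv.Perm H) (S : Finset H) : ℤ :=
  (vCount σ : ℤ) - (kCount σ θ S : ℤ)

/-- `n(F) = e(F) - r(F)`: the nullity of the spanning subgraph. -/
noncomputable def nCount {H : Type*} [Fintype H] [DecidableEq H]
    (σ θ : Equiv.Perm H) (S : Finset H) : ℤ :=
  eCount S - rCount σ θ S

/-- The spanning subgraphs `F ⊆ E`, encoded as the `θ`-invariant subsets of the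
set of half-edges. -/
def spanningSets {H : Type*} [Fintype H] [DecidableEq H] (θ : Equiv.Perm H) :
    Finset (Finset H) :=
  Finset.univ.filter (fun S => ∀ a ∈ S, θ a ∈ S)

set_option linter.unusedSectionVars false
set_option linter.unusedVariables false
set_option maxHeartbeats 1000000

section OrbitCount

open MulAction Subgroup Equiv

variable {H : Type*} [Fintype H] [DecidableEq H]

noncomputable abbrev nOrb (K : Subgroup (Equiv.Perm H)) : ℕ :=
  Nat.card (MulAction.orbitRel.Quotient K H)

noncomputable instance (K : Subgroup (Equiv.Perm H)) :
    Finite (MulAction.orbitRel.Quotient K H) := Quotient.finite _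

lemma orbit_mono {K L : Subgroup (Equiv.Perm H)} (h : K ≤ L) {u v : H}
    (hu : u ∈ orbit K v) : u ∈ orbit L v := by
  obtain ⟨⟨g, hg⟩, rfl⟩ := hu
  exact ⟨⟨g, h hg⟩, rfl⟩

lemma orbit_symm {K : Subgroup (Equiv.Perm H)} {u v : H}
    (h : u ∈ orbit K v) : v ∈ orbit K u := mem_orbit_symm.mp h

lemma orbit_trans {K : Subgroup (Equiv.Perm H)} {u v w : H}
    (h1 : u ∈ orbit K v) (h2 : v ∈ orbit K w) : u ∈ orbit K w := by
  have := (orbitRel K H).trans' (orbitRel_apply.mpr h1) (orbitRel_apply.mpr h2)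
  exact orbitRel_apply.mp this

noncomputable def qmap {K L : Subgroup (Equiv.Perm H)} (h : K ≤ L) :
    MulAction.orbitRel.Quotient K H → MulAction.orbitRel.Quotient L H :=
  Quotient.map' id (fun u v huv =>
    orbitRel_apply.mpr (orbit_mono h (orbitRel_apply.mp huv)))

lemma qmap_mk {K L : Subgroup (Equiv.Perm H)} (h : K ≤ L) (u : H) :
    qmap h (Quotient.mk'' u) = (Quotient.mk'' u : MulAction.orbitRel.Quotient L H) := rfl

lemma qmap_surj {K L : Subgroup (Equiv.Perm H)} (h : K ≤ L) :
    Function.Surjective (qmap h) := by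
  intro q
  obtain ⟨u, rfl⟩ := Quotient.exists_rep q
  exact ⟨Quotient.mk'' u, rfl⟩

lemma nOrb_le_of_le {K L : Subgroup (Equiv.Perm H)} (h : K ≤ L) :
    nOrb L ≤ nOrb K :=
  Nat.card_le_card_of_surjective (qmap h) (qmap_surj h)

lemma orbit_sup_swap_structure (K : Subgroup (Equiv.Perm H)) (a b : H) {u v : H}
    (huv : u ∈ orbit ((K ⊔ Subgroup.zpowers (Equiv.swap a b) : Subgroup (Equiv.Perm H))) v) :
    u ∈ orbit K v ∨
      ((u ∈ orbit K a ∨ u ∈ orbit K b) ∧ (v ∈ orbit K a ∨ v ∈ orbit K b)) := by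
  set s := Equiv.swap a b with hs
  set R : H → H → Prop := fun u v => u ∈ orbit K v ∨
      ((u ∈ orbit K a ∨ u ∈ orbit K b) ∧ (v ∈ orbit K a ∨ v ∈ orbit K b)) with hR
  have hRrefl : ∀ u, R u u := fun u => Or.inl (mem_orbit_self u)
  have hRsymm : ∀ {u v}, R u v → R v u := by
    rintro u v (h | ⟨h1, h2⟩)
    · exact Or.inl (orbit_symm h)
    · exact Or.inr ⟨h2, h1⟩
  have hRtrans : ∀ {u v w}, R u v → R v w → R u w := by
    rintro u v w (h | ⟨h1, h2⟩) (h' | ⟨h1', h2'⟩)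
    · exact Or.inl (orbit_trans h h')
    · exact Or.inr ⟨h1'.imp (orbit_trans h) (orbit_trans h), h2'⟩
    · exact Or.inr ⟨h1, h2.imp (fun hh => orbit_trans (orbit_symm h') hh)
        (fun hh => orbit_trans (orbit_symm h') hh)⟩
    · exact Or.inr ⟨h1, h2'⟩
  have hL : K ⊔ Subgroup.zpowers s = Subgroup.closure (↑K ∪ {s}) := by
    rw [Subgroup.closure_union, Subgroup.closure_eq, ← Subgroup.zpowers_eq_closure]
  obtain ⟨⟨g, hg⟩, rfl⟩ := huv
  rw [hL] at hg
  have hgen : ∀ x ∈ (↑K ∪ {s} : Set (Equiv.Perm H)), ∀ u, R (x • u) u := by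
    rintro x (hx | hx) u
    · exact Or.inl ⟨⟨x, hx⟩, rfl⟩
    · simp only [Set.mem_singleton_iff] at hx
      subst hx
      by_cases hua : u = a
      · have hsu : s • u = b := by rw [Equiv.Perm.smul_def, hs, hua, Equiv.swap_apply_left]
        rw [hsu]
        exact Or.inr ⟨Or.inr (mem_orbit_self b),
          Or.inl (by rw [hua]; exact mem_orbit_self a)⟩
      · by_cases hub : u = b
        · have hsu : s • u = a := by rw [Equiv.Perm.smul_def, hs, hub, Equiv.swap_apply_right]
          rw [hsu]
          exact Or.inr ⟨Or.inl (mem_orbit_self a),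
            Or.inr (by rw [hub]; exact mem_orbit_self b)⟩
        · have : s • u = u := by
            rw [Equiv.Perm.smul_def, hs, Equiv.swap_apply_of_ne_of_ne hua hub]
          rw [this]
          exact hRrefl u
  have key : ∀ g', g' ∈ Subgroup.closure (↑K ∪ {s} : Set (Equiv.Perm H)) →
      ∀ u, R (g' • u) u := by
    intro g' hg'
    refine Subgroup.closure_induction (p := fun x _ => ∀ u, R (x • u) u) hgen ?_ ?_ ?_ hg'
    · intro u
      simpa using hRrefl u
    · intro x y hx hy px py u
      rw [mul_smul]
      exact hRtrans (px (y • u)) (py u)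
    · intro x hx px u
      have h2 := px (x⁻¹ • u)
      rw [smul_inv_smul] at h2
      exact hRsymm h2
  exact key g hg v



section Swap
variable (K : Subgroup (Equiv.Perm H)) (a b : H)

lemma qmap_eq_cases {u v : MulAction.orbitRel.Quotient K H}
    (h : qmap (le_sup_left : K ≤ K ⊔ Subgroup.zpowers (Equiv.swap a b)) u =
         qmap le_sup_left v) (hne : u ≠ v) :
    (u = Quotient.mk'' a ∨ u = Quotient.mk'' b) ∧
    (v = Quotient.mk'' a ∨ v = Quotient.mk'' b) := by
  obtain ⟨x, rfl⟩ := Quotient.exists_rep u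
  obtain ⟨y, rfl⟩ := Quotient.exists_rep v
  have h' : x ∈ orbit ((K ⊔ Subgroup.zpowers (Equiv.swap a b) : Subgroup (Equiv.Perm H))) y :=
    orbitRel_apply.mp (Quotient.exact' h)
  rcases orbit_sup_swap_structure K a b h' with h0 | ⟨h1, h2⟩
  · exact absurd (Quotient.sound' (orbitRel_apply.mpr h0)) hne
  · constructor
    · exact h1.imp (fun hh => Quotient.sound' (orbitRel_apply.mpr hh))
        (fun hh => Quotient.sound' (orbitRel_apply.mpr hh))
    · exact h2.imp (fun hh => Quotient.sound' (orbitRel_apply.mpr hh))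
        (fun hh => Quotient.sound' (orbitRel_apply.mpr hh))

lemma nOrb_le_sup_swap_add_one :
    nOrb K ≤ nOrb ((K ⊔ Subgroup.zpowers (Equiv.swap a b)) : Subgroup (Equiv.Perm H)) + 1 := by
  set L := ((K ⊔ Subgroup.zpowers (Equiv.swap a b)) : Subgroup (Equiv.Perm H)) with hLdef
  set f := qmap (le_sup_left : K ≤ L) with hf
  set g : MulAction.orbitRel.Quotient K H → Option (MulAction.orbitRel.Quotient L H) :=
    fun q => if q = Quotient.mk'' b then none else some (f q) with hg
  have hinj : Function.Injective g := by
    intro u v huv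
    by_cases hu : u = Quotient.mk'' b <;> by_cases hv : v = Quotient.mk'' b
    · rw [hu, hv]
    · simp only [hg, if_pos hu, if_neg hv] at huv
      exact absurd huv (by simp)
    · simp only [hg, if_pos hv, if_neg hu] at huv
      exact absurd huv (by simp)
    · simp only [hg, if_neg hu, if_neg hv, Option.some.injEq] at huv
      by_contra hne
      obtain ⟨h1, h2⟩ := qmap_eq_cases K a b huv hne
      rcases h1 with h1 | h1
      · rcases h2 with h2 | h2
        · rw [h1, h2] at hne; exact hne rfl
        · exact hv h2
      · exact hu h1
  calc nOrb K ≤ Nat.card (Option (MulAction.orbitRel.Quotient L H)) :=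
        Nat.card_le_card_of_injective g hinj
    _ = nOrb L + 1 := Finite.card_option

lemma nOrb_sup_swap_of_mem (hab : a ∈ orbit K b) :
    nOrb ((K ⊔ Subgroup.zpowers (Equiv.swap a b)) : Subgroup (Equiv.Perm H)) = nOrb K := by
  set L := ((K ⊔ Subgroup.zpowers (Equiv.swap a b)) : Subgroup (Equiv.Perm H)) with hLdef
  set f := qmap (le_sup_left : K ≤ L) with hf
  have hinj : Function.Injective f := by
    intro u v huv
    by_contra hne
    obtain ⟨h1, h2⟩ := qmap_eq_cases K a b huv hne
    have hab' : (Quotient.mk'' a : MulAction.orbitRel.Quotient K H) = Quotient.mk'' b :=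
      Quotient.sound' (orbitRel_apply.mpr hab)
    rcases h1 with h1 | h1 <;> rcases h2 with h2 | h2 <;>
      simp [h1, h2, hab'] at hne ⊢
  exact (Nat.card_eq_of_bijective f ⟨hinj, qmap_surj _⟩).symm

lemma nOrb_sup_swap_of_notMem (h : a ∉ orbit K b) :
    nOrb ((K ⊔ Subgroup.zpowers (Equiv.swap a b)) : Subgroup (Equiv.Perm H)) < nOrb K := by
  set L := ((K ⊔ Subgroup.zpowers (Equiv.swap a b)) : Subgroup (Equiv.Perm H)) with hLdef
  set f := qmap (le_sup_left : K ≤ L) with hf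
  letI : Fintype (MulAction.orbitRel.Quotient K H) := Fintype.ofFinite _
  letI : Fintype (MulAction.orbitRel.Quotient L H) := Fintype.ofFinite _
  rw [show nOrb L = Fintype.card (MulAction.orbitRel.Quotient L H) from Nat.card_eq_fintype_card,
    show nOrb K = Fintype.card (MulAction.orbitRel.Quotient K H) from Nat.card_eq_fintype_card]
  refine Fintype.card_lt_of_surjective_not_injective f (qmap_surj _) ?_
  intro hinj
  have hmemL : a ∈ orbit L b := by
    refine ⟨⟨Equiv.swap a b, Subgroup.mem_sup_right (Subgroup.mem_zpowers _)⟩, ?_⟩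
    exact Equiv.swap_apply_right a b
  have hfab : f (Quotient.mk'' a) = f (Quotient.mk'' b) :=
    Quotient.sound' (orbitRel_apply.mpr hmemL)
  have : (Quotient.mk'' a : MulAction.orbitRel.Quotient K H) = Quotient.mk'' b := hinj hfab
  exact h (orbitRel_apply.mp (Quotient.exact' this))

end Swap

lemma mem_orbit_mul_swap {π : Equiv.Perm H} {a b : H} (hab : a ≠ b)
    (h : a ∉ orbit (Subgroup.zpowers π) b) :
    b ∈ orbit (Subgroup.zpowers (π * Equiv.swap a b)) a := by
  set τ := π * Equiv.swap a b with hτ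
  have hfin : ∃ n, 0 < n ∧ (π ^ n) b = b := by
    refine ⟨Fintype.card (Equiv.Perm H), Fintype.card_pos, ?_⟩
    rw [pow_card_eq_one]
    rfl
  obtain ⟨hkpos, hkb⟩ := Nat.find_spec hfin
  set k := Nat.find hfin with hk
  have hmin : ∀ m, m < k → ¬(0 < m ∧ (π ^ m) b = b) := fun m hm => Nat.find_min hfin hm
  have hne_a : ∀ j, (π ^ j) b ≠ a := by
    intro j hj
    exact h ⟨⟨π ^ j, Subgroup.pow_mem _ (Subgroup.mem_zpowers π) j⟩, hj⟩
  have claim : ∀ j, 1 ≤ j → j ≤ k → (τ ^ j) a = (π ^ j) b := by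
    intro j
    induction j with
    | zero => intro h1 _; exact absurd h1 (by omega)
    | succ j ih =>
      intro _ h2
      by_cases hj0 : j = 0
      · subst hj0
        show (τ ^ 1) a = (π ^ 1) b
        rw [pow_one, pow_one, hτ, Equiv.Perm.mul_apply, Equiv.swap_apply_left]
      · have hj1 : 1 ≤ j := Nat.one_le_iff_ne_zero.mpr hj0
        have hIH := ih hj1 (Nat.le_of_succ_le h2)
        have hjltk : j < k := Nat.lt_of_succ_le h2
        have h_ne_b : (π ^ j) b ≠ b := fun hb => hmin j hjltk ⟨hj1, hb⟩
        have hstep : (τ ^ (j + 1)) a = τ ((τ ^ j) a) := by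
          rw [pow_succ', Equiv.Perm.mul_apply]
        rw [hstep, hIH, pow_succ', Equiv.Perm.mul_apply,
          Equiv.swap_apply_of_ne_of_ne (hne_a j) h_ne_b, Equiv.Perm.mul_apply]
  exact ⟨⟨τ ^ k, Subgroup.pow_mem _ (Subgroup.mem_zpowers τ) k⟩, by
    show (τ ^ k) a = b
    rw [claim k hkpos le_rfl, hkb]⟩
end OrbitCount

section Step

open MulAction Subgroup Equiv

variable {H : Type*} [Fintype H] [DecidableEq H]
variable (σ θ : Equiv.Perm H)

lemma restrictPerm_apply {S : Finset H} (hcl : ∀ x ∈ S, θ x ∈ S)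
    (hinv : ∀ x, θ (θ x) = x) (x : H) :
    restrictPerm θ S x = if x ∈ S then θ x else x := by
  rw [restrictPerm, dif_pos ⟨hcl, hinv⟩]
  rfl

lemma theta_notMem (hinv : ∀ x, θ (θ x) = x) {S : Finset H}
    (hcl : ∀ x ∈ S, θ x ∈ S) {a : H} (ha : a ∉ S) : θ a ∉ S := by
  intro hb
  have := hcl _ hb
  rw [hinv] at this
  exact ha this

lemma insert_closed (hinv : ∀ x, θ (θ x) = x) {S : Finset H}
    (hcl : ∀ x ∈ S, θ x ∈ S) (a : H) :
    ∀ x ∈ insert a (insert (θ a) S), θ x ∈ insert a (insert (θ a) S) := by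
  intro x hx
  rcases Finset.mem_insert.mp hx with rfl | hx
  · exact Finset.mem_insert_of_mem (Finset.mem_insert_self _ _)
  rcases Finset.mem_insert.mp hx with rfl | hx
  · rw [hinv]
    exact Finset.mem_insert_self _ _
  · exact Finset.mem_insert_of_mem (Finset.mem_insert_of_mem (hcl _ hx))

lemma restrict_insert (hinv : ∀ x, θ (θ x) = x) (hfp : ∀ x, θ x ≠ x)
    {S : Finset H} (hcl : ∀ x ∈ S, θ x ∈ S) {a : H} (ha : a ∉ S) :
    restrictPerm θ (insert a (insert (θ a) S)) =
      restrictPerm θ S * Equiv.swap a (θ a) := by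
  have hb : θ a ∉ S := theta_notMem θ hinv hcl ha
  have hab : a ≠ θ a := fun h => hfp a h.symm
  ext x
  rw [Equiv.Perm.mul_apply, restrictPerm_apply θ (insert_closed θ hinv hcl a) hinv,
    restrictPerm_apply θ hcl hinv]
  by_cases hxa : x = a
  · subst hxa
    rw [Equiv.swap_apply_left, if_pos (Finset.mem_insert_self _ _), if_neg hb]
  · by_cases hxb : x = θ a
    · subst hxb
      rw [Equiv.swap_apply_right, if_pos (Finset.mem_insert_of_mem (Finset.mem_insert_self _ _)),
        if_neg ha, hinv]
    · rw [Equiv.swap_apply_of_ne_of_ne hxa hxb]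
      have : x ∈ insert a (insert (θ a) S) ↔ x ∈ S := by
        simp [Finset.mem_insert, hxa, hxb]
      by_cases hxS : x ∈ S
      · rw [if_pos (this.mpr hxS), if_pos hxS]
      · rw [if_neg (fun hh => hxS (this.mp hh)), if_neg hxS]

lemma genus_step (hinv : ∀ x, θ (θ x) = x) (hfp : ∀ x, θ x ≠ x)
    {S : Finset H} (hcl : ∀ x ∈ S, θ x ∈ S) {a : H} (ha : a ∉ S) :
    2 * (kCount σ θ S : ℤ) + eCount S - (bcCount σ θ S : ℤ) ≤
      2 * (kCount σ θ (insert a (insert (θ a) S)) : ℤ) +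
        eCount (insert a (insert (θ a) S)) -
        (bcCount σ θ (insert a (insert (θ a) S)) : ℤ) := by
  have hb : θ a ∉ S := theta_notMem θ hinv hcl ha
  have hab : a ≠ θ a := fun h => hfp a h.symm
  set b := θ a with hbdef
  set s := Equiv.swap a b with hsdef
  set ρ := restrictPerm θ S with hρdef
  have hρ' : restrictPerm θ (insert a (insert b S)) = ρ * s :=
    restrict_insert θ hinv hfp hcl ha
  -- edge count
  have hcard : (insert a (insert b S)).card = S.card + 2 := by
    rw [Finset.card_insert_of_notMem (by simp [hab, ha]),
      Finset.card_insert_of_notMem hb]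
  have he : eCount (insert a (insert b S)) = eCount S + 1 := by
    have h2 : (S.card + 2) / 2 = S.card / 2 + 1 := by omega
    rw [eCount, eCount, hcard, h2]
    push_cast
    ring
  -- groups
  set K₁ := (Subgroup.closure {σ, ρ} : Subgroup (Equiv.Perm H)) with hK₁def
  set K₂ := (Subgroup.closure {σ, ρ * s} : Subgroup (Equiv.Perm H)) with hK₂def
  set L := ((K₁ ⊔ Subgroup.zpowers s) : Subgroup (Equiv.Perm H)) with hLdef
  have hσK₁ : σ ∈ K₁ := Subgroup.subset_closure (by simp)
  have hρK₁ : ρ ∈ K₁ := Subgroup.subset_closure (by simp)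
  have hsL : s ∈ L := Subgroup.mem_sup_right (Subgroup.mem_zpowers s)
  have hK₂L : K₂ ≤ L := by
    rw [hK₂def, Subgroup.closure_le]
    intro x hx
    rcases Set.mem_insert_iff.mp hx with rfl | hx
    · exact Subgroup.mem_sup_left hσK₁
    · rw [Set.mem_singleton_iff] at hx
      subst hx
      exact mul_mem (Subgroup.mem_sup_left hρK₁) hsL
  set π := σ * ρ with hπdef
  set τ := π * s with hτdef
  have hτs : τ * s = π := by
    rw [hτdef, mul_assoc, hsdef, Equiv.swap_mul_self, mul_one]
  have hπK₁ : π ∈ K₁ := mul_mem hσK₁ hρK₁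
  have hzπK₁ : Subgroup.zpowers π ≤ K₁ := Subgroup.zpowers_le.mpr hπK₁
  set Lc' := ((Subgroup.zpowers τ ⊔ Subgroup.zpowers s) : Subgroup (Equiv.Perm H)) with hLc'def
  have hπLc' : π ∈ Lc' := by
    rw [← hτs]
    exact mul_mem (Subgroup.mem_sup_left (Subgroup.mem_zpowers τ))
      (Subgroup.mem_sup_right (Subgroup.mem_zpowers s))
  -- identify counts
  have hk : kCount σ θ S = nOrb K₁ := rfl
  have hk' : kCount σ θ (insert a (insert b S)) = nOrb K₂ := by
    unfold kCount
    rw [hρ']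
  have hbc : bcCount σ θ S = nOrb (Subgroup.zpowers π) := rfl
  have hbc' : bcCount σ θ (insert a (insert b S)) = nOrb (Subgroup.zpowers τ) := by
    unfold bcCount permOrbits
    rw [hρ', ← mul_assoc]
  rw [hk, hk', hbc, hbc', he]
  by_cases hAB : a ∈ orbit K₁ b
  · -- same component: k does not decrease, bc increases by at most 1
    have hkk : nOrb K₁ ≤ nOrb K₂ := by
      have h1 : nOrb L = nOrb K₁ := nOrb_sup_swap_of_mem K₁ a b hAB
      have h2 : nOrb L ≤ nOrb K₂ := nOrb_le_of_le hK₂L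
      omega
    have hbb : nOrb (Subgroup.zpowers τ) ≤ nOrb (Subgroup.zpowers π) + 1 := by
      have h1 : nOrb (Subgroup.zpowers τ) ≤ nOrb Lc' + 1 :=
        nOrb_le_sup_swap_add_one (Subgroup.zpowers τ) a b
      have h2 : nOrb Lc' ≤ nOrb (Subgroup.zpowers π) :=
        nOrb_le_of_le (Subgroup.zpowers_le.mpr hπLc')
      omega
    omega
  · -- different components: k decreases by at most 1, bc decreases
    have hkk : nOrb K₁ ≤ nOrb K₂ + 1 := by
      have h1 : nOrb K₁ ≤ nOrb L + 1 := nOrb_le_sup_swap_add_one K₁ a b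
      have h2 : nOrb L ≤ nOrb K₂ := nOrb_le_of_le hK₂L
      omega
    have hπb : a ∉ orbit (Subgroup.zpowers π) b := fun hm => hAB (orbit_mono hzπK₁ hm)
    have hbτ : b ∈ orbit (Subgroup.zpowers τ) a := mem_orbit_mul_swap hab hπb
    have haτ : a ∈ orbit (Subgroup.zpowers τ) b := orbit_symm hbτ
    have hLcLc' : ((Subgroup.zpowers π ⊔ Subgroup.zpowers s) : Subgroup (Equiv.Perm H)) = Lc' := by
      apply le_antisymm
      · exact sup_le (Subgroup.zpowers_le.mpr hπLc') le_sup_right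
      · refine sup_le (Subgroup.zpowers_le.mpr ?_) le_sup_right
        exact mul_mem (Subgroup.mem_sup_left (Subgroup.mem_zpowers π))
          (Subgroup.mem_sup_right (Subgroup.mem_zpowers s))
    have hbb : nOrb (Subgroup.zpowers τ) < nOrb (Subgroup.zpowers π) := by
      have h1 : nOrb Lc' = nOrb (Subgroup.zpowers τ) :=
        nOrb_sup_swap_of_mem (Subgroup.zpowers τ) a b haτ
      have h2 : nOrb ((Subgroup.zpowers π ⊔ Subgroup.zpowers s) : Subgroup (Equiv.Perm H)) <
          nOrb (Subgroup.zpowers π) := nOrb_sup_swap_of_notMem (Subgroup.zpowers π) a b hπb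
      rw [hLcLc', h1] at h2
      exact h2
    omega

end Step

section Mono

variable {H : Type*} [Fintype H] [DecidableEq H]

lemma genus_mono (σ θ : Equiv.Perm H) (hinv : ∀ x, θ (θ x) = x) (hfp : ∀ x, θ x ≠ x) :
    ∀ n : ℕ, ∀ S : Finset H, Sᶜ.card = n → (∀ x ∈ S, θ x ∈ S) →
      2 * (kCount σ θ S : ℤ) + eCount S - (bcCount σ θ S : ℤ) ≤
        2 * (kCount σ θ (Finset.univ : Finset H) : ℤ) + eCount (Finset.univ : Finset H) -
          (bcCount σ θ (Finset.univ : Finset H) : ℤ) := by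
  intro n
  induction n using Nat.strong_induction_on with
  | _ n ih =>
    intro S hn hS
    by_cases hSu : S = Finset.univ
    · subst hSu
      exact le_rfl
    · obtain ⟨a, ha⟩ : ∃ a, a ∉ S := by
        by_contra hcon
        push_neg at hcon
        exact hSu (Finset.eq_univ_iff_forall.mpr hcon)
      set S' := insert a (insert (θ a) S) with hS'def
      have hS'cl : ∀ x ∈ S', θ x ∈ S' := insert_closed θ hinv hS a
      have hsub : S'ᶜ ⊂ Sᶜ := by
        rw [Finset.ssubset_iff_of_subset]
        · exact ⟨a, Finset.mem_compl.mpr ha, by simp [hS'def]⟩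
        · rw [Finset.compl_subset_compl]
          intro x hx
          exact Finset.mem_insert_of_mem (Finset.mem_insert_of_mem hx)
      have hlt : S'ᶜ.card < n := hn ▸ Finset.card_lt_card hsub
      exact le_trans (genus_step σ θ hinv hfp hS ha) (ih _ hlt S' rfl hS'cl)

end Mono

/-- **Planar Bollobás–Riordan polynomial equals the Tutte polynomial.**  For an
orientable ribbon graph encoded by a combinatorial map `(H, σ, θ)` of genus zero
(i.e. with `k(E) - bc(E) + n(E) = 0`), in any commutative ring and for all `x, y, z`,
`R_G(x-1, y-1, z) = ∑_F (x-1)^{r(G)-r(F)} (y-1)^{n(F)} = T_Γ(x, y)`; in particular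
`R_G` contains no powers of `z` and is independent of `z`.  (All exponents are
nonnegative integers, written here via `Int.toNat`.) -/
theorem planar_bollobas_riordan_eq_tutte
    {H : Type*} [Fintype H] [DecidableEq H] (σ θ : Equiv.Perm H)
    (hinv : ∀ a, θ (θ a) = a) (hfp : ∀ a, θ a ≠ a)
    (hgenus : (kCount σ θ (Finset.univ : Finset H) : ℤ) -
        (bcCount σ θ (Finset.univ : Finset H) : ℤ) +
        nCount σ θ (Finset.univ : Finset H) = 0)
    {R : Type*} [CommRing R] (x y z : R) :
    ∑ S ∈ spanningSets θ,
        (x - 1) ^ (rCount σ θ (Finset.univ : Finset H) - rCount σ θ S).toNat *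
        (y - 1) ^ (nCount σ θ S).toNat *
        z ^ ((kCount σ θ S : ℤ) - (bcCount σ θ S : ℤ) + nCount σ θ S).toNat
      =
    ∑ S ∈ spanningSets θ,
        (x - 1) ^ (rCount σ θ (Finset.univ : Finset H) - rCount σ θ S).toNat *
        (y - 1) ^ (nCount σ θ S).toNat := by
  refine Finset.sum_congr rfl fun S hS => ?_
  have hScl : ∀ a ∈ S, θ a ∈ S := by
    simpa [spanningSets] using hS
  have hmono := genus_mono σ θ hinv hfp (Sᶜ.card) S rfl hScl
  have hexp : (kCount σ θ S : ℤ) - (bcCount σ θ S : ℤ) + nCount σ θ S ≤ 0 := by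
    unfold nCount rCount at hgenus ⊢
    omega
  rw [Int.toNat_of_nonpos hexp, pow_zero, mul_one]
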